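/- arXiv:2507.03389 — 5 statements merged into one kernel-verified Lean document; each statement's English description precedes it below -/
import Mathlib

section
/- Let G be a group and A a topologically G-graded C*-algebra (the canonical map E : A → A_e is faithful on positive elements). For any subgroup H ≤ G, the induced H-grading of A_H = cl span(⋃_{h∈H} A_h) is topological. -/
/-- A `G`-grading of a closed subspace `S` of a C*-algebra `A`: closed subspaces `part g`
spanning a dense subspace of `S`, with `part g * part h ⊆ part (g*h)`,
`(part g)* = part g⁻¹`, `part 1` a C*-subalgebra, together with a positive norm-decreasing
conditional expectation onto `part 1`. Taking `S = ⊤` gives a `G`-grading of `A` itself. -/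
structure GradedCStar (G : Type*) [Group G] (A : Type*) [NonUnitalCStarAlgebra A]
    [PartialOrder A] [StarOrderedRing A] (S : Submodule ℂ A) where
  part : G → Submodule ℂ A
  part_le : ∀ g, part g ≤ S
  closed : ∀ g, IsClosed (part g : Set A)
  mul_mem : ∀ {g h : G} {a b : A}, a ∈ part g → b ∈ part h → a * b ∈ part (g * h)
  star_mem : ∀ {g : G} {a : A}, a ∈ part g → star a ∈ part g⁻¹
  span_dense : (⨆ g, part g).topologicalClosure = S
  E : A →ₗ[ℂ] A
  E_pos : ∀ a ∈ S, 0 ≤ a → 0 ≤ E a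
  E_norm : ∀ a ∈ S, ‖E a‖ ≤ ‖a‖
  E_mem : ∀ a ∈ S, E a ∈ part 1
  E_id : ∀ a ∈ part 1, E a = a
  E_zero : ∀ {g : G}, g ≠ 1 → ∀ a ∈ part g, E a = 0

/-- A grading is *topological* if the conditional expectation `E` is faithful on
positive elements. -/
def GradedCStar.IsTopological {G : Type*} [Group G] {A : Type*} [NonUnitalCStarAlgebra A]
    [PartialOrder A] [StarOrderedRing A] {S : Submodule ℂ A}
    (gr : GradedCStar G A S) : Prop :=
  ∀ a ∈ S, 0 ≤ a → gr.E a = 0 → a = 0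

/-- if the `G`-grading of `A` is topological (i.e. `E : A → A_e` is faithful
on positive elements) and `H ≤ G`, then the induced `H`-grading of
`A_H = cl span (⋃_{h ∈ H} A_h)` is topological. -/
theorem graded_subalgebra_topological_of_topological
    {G : Type*} [Group G] {A : Type*} [NonUnitalCStarAlgebra A]
    [PartialOrder A] [StarOrderedRing A]
    (gr : GradedCStar G A ⊤) (htop : gr.IsTopological) (H : Subgroup G) :
    ∃ grH : GradedCStar H A ((⨆ h : H, gr.part (h : G)).topologicalClosure),
      (∀ h : H, grH.part h = gr.part (h : G)) ∧ grH.E = gr.E ∧ grH.IsTopological := by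
  refine ⟨{ part := fun h => gr.part (h : G)
            part_le := fun h => le_trans (le_iSup (fun h : H => gr.part (h : G)) h)
              (Submodule.le_topologicalClosure _)
            closed := fun h => gr.closed _
            mul_mem := fun hg hh => gr.mul_mem hg hh
            star_mem := fun hg => gr.star_mem hg
            span_dense := rfl
            E := gr.E
            E_pos := fun a _ ha => gr.E_pos a trivial ha
            E_norm := fun a _ => gr.E_norm a trivial
            E_mem := fun a _ => gr.E_mem a trivial
            E_id := fun a ha => gr.E_id a ha
            E_zero := fun {h} hne a ha => gr.E_zero (fun hc => hne (by ext; exact hc)) a ha },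
        fun h => rfl, rfl, fun a _ ha h0 => htop a trivial ha h0⟩
end

section
/- A G-grading of a C*-algebra A is strong if and only if cl span(A_g A_{g⁻¹}) = A_e for every g ∈ G. -/
def GradedCStar.IsStrong {G : Type*} [Group G] {A : Type*} [NonUnitalCStarAlgebra A]
    [PartialOrder A] [StarOrderedRing A] {S : Submodule ℂ A}
    (gr : GradedCStar G A S) : Prop :=
  ∀ g h : G, (Submodule.span ℂ {x : A | ∃ a ∈ gr.part g, ∃ b ∈ gr.part h,
      x = a * b}).topologicalClosure = gr.part (g * h)

/-!
Only `A_{gh} ⊆ cl span (A_g A_h)` needs an argument. For `c ∈ A_{gh}`, the element `c* c` lies in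
the C*-algebra `A_e`, and the identity `(c - c e)* (c - c e) = r - e r` with `r = c* c - c* c e`
shows that an approximate unit `e` of `A_e` satisfies `c e → c`. Since
`A_e = cl span (A_{h⁻¹} A_h)`, each `c e` lies in `cl span (A_{gh h⁻¹} A_h) = cl span (A_g A_h)`.
-/

open Filter Topology

section CStarRing

variable {A : Type*} [NonUnitalNormedRing A] [StarRing A] [CStarRing A]

theorem norm_sub_mul_sq_le_two_mul {c e : A} (he : IsSelfAdjoint e) (he₁ : ‖e‖ ≤ 1) :
    ‖c - c * e‖ ^ 2 ≤ 2 * ‖star c * c - star c * c * e‖ := by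
  set r := star c * c - star c * c * e
  have hstar : star (c - c * e) * (c - c * e) = r - e * r := by
    simp only [star_sub, star_mul, he.star_eq, r]
    noncomm_ring
  calc ‖c - c * e‖ ^ 2 = ‖r - e * r‖ := by
        rw [sq, ← CStarRing.norm_star_mul_self, hstar]
    _ ≤ ‖r‖ + ‖e‖ * ‖r‖ := (norm_sub_le _ _).trans (by gcongr; exact norm_mul_le _ _)
    _ ≤ 2 * ‖r‖ := by nlinarith [norm_nonneg r]

theorem tendsto_mul_of_tendsto_star_mul_self_mul {ι : Type*} {l : Filter ι} {e : ι → A}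
    {c : A} (hsa : ∀ᶠ i in l, IsSelfAdjoint (e i)) (hnorm : ∀ᶠ i in l, ‖e i‖ ≤ 1)
    (h : Tendsto (fun i ↦ star c * c * e i) l (𝓝 (star c * c))) :
    Tendsto (fun i ↦ c * e i) l (𝓝 c) := by
  rw [tendsto_iff_norm_sub_tendsto_zero] at h ⊢
  have hbound : Tendsto (fun i ↦ √(2 * ‖star c * c * e i - star c * c‖)) l (𝓝 0) := by
    simpa using (h.const_mul 2).sqrt
  refine squeeze_zero' (.of_forall fun _ ↦ norm_nonneg _) ?_ hbound
  filter_upwards [hsa, hnorm] with i hi hi₁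
  rw [Real.le_sqrt (norm_nonneg _) (by positivity), norm_sub_rev, norm_sub_rev _ (star c * c)]
  exact norm_sub_mul_sq_le_two_mul hi hi₁

end CStarRing

theorem mem_closure_image_mul_of_star_mul_self_mem {A : Type*} [NonUnitalCStarAlgebra A]
    (B : NonUnitalStarSubalgebra ℂ A) [IsClosed (B : Set A)] {c : A}
    (hc : star c * c ∈ B) : c ∈ closure ((c * ·) '' (B : Set A)) := by
  let _ := CStarAlgebra.spectralOrder B
  have _ := CStarAlgebra.spectralOrderedRing B
  have hl := CStarAlgebra.increasingApproximateUnit B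
  refine mem_closure_of_tendsto (b := CStarAlgebra.approximateUnit B)
    (f := fun e : B ↦ c * e) ?_ (.of_forall fun e ↦ ⟨e, e.prop, rfl⟩)
  refine tendsto_mul_of_tendsto_star_mul_self_mul ?_ hl.eventually_norm
    ((continuous_subtype_val.tendsto _).comp (hl.tendsto_mul_left ⟨_, hc⟩))
  filter_upwards [hl.eventually_isSelfAdjoint] with e he
  exact congrArg Subtype.val he.star_eq

namespace GradedCStar

variable {G : Type*} [Group G] {A : Type*} [NonUnitalCStarAlgebra A] [PartialOrder A]
  [StarOrderedRing A] {S : Submodule ℂ A} (gr : GradedCStar G A S)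

def closedSpanMul (g h : G) : Submodule ℂ A :=
  (Submodule.span ℂ {x : A | ∃ a ∈ gr.part g, ∃ b ∈ gr.part h, x = a * b}).topologicalClosure

theorem isClosed_closedSpanMul (g h : G) : IsClosed (gr.closedSpanMul g h : Set A) :=
  Submodule.isClosed_topologicalClosure _

theorem closedSpanMul_le_part (g h : G) : gr.closedSpanMul g h ≤ gr.part (g * h) := by
  refine Submodule.topologicalClosure_minimal _ (Submodule.span_le.mpr ?_) (gr.closed _)
  rintro x ⟨a, ha, b, hb, rfl⟩
  exact gr.mul_mem ha hb

theorem mul_mem_closedSpanMul {k g h : G} {d x : A} (hd : d ∈ gr.part k)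
    (hx : x ∈ gr.closedSpanMul g h) : d * x ∈ gr.closedSpanMul (k * g) h := by
  let L : A →L[ℂ] A := ContinuousLinearMap.mul ℂ A d
  suffices gr.closedSpanMul g h ≤ (gr.closedSpanMul (k * g) h).comap L.toLinearMap from this hx
  refine Submodule.topologicalClosure_minimal _ (Submodule.span_le.mpr ?_)
    ((gr.isClosed_closedSpanMul _ _).preimage L.continuous)
  rintro _ ⟨a, ha, b, hb, rfl⟩
  change d * (a * b) ∈ gr.closedSpanMul (k * g) h
  rw [← mul_assoc]
  exact Submodule.le_topologicalClosure _
    (Submodule.subset_span ⟨d * a, gr.mul_mem hd ha, b, hb, rfl⟩)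

def partOneSubalgebra : NonUnitalStarSubalgebra ℂ A where
  toSubmodule := gr.part 1
  mul_mem' ha hb := by simpa using gr.mul_mem ha hb
  star_mem' ha := by simpa using gr.star_mem ha

instance : IsClosed (gr.partOneSubalgebra : Set A) := gr.closed 1

theorem part_mul_le_closedSpanMul {g h : G} (hh : gr.closedSpanMul h⁻¹ h = gr.part 1) :
    gr.part (g * h) ≤ gr.closedSpanMul g h := by
  intro c hc
  have hcc : star c * c ∈ gr.part 1 := by simpa using gr.mul_mem (gr.star_mem hc) hc
  have himage : (c * ·) '' (gr.partOneSubalgebra : Set A) ⊆ gr.closedSpanMul g h := by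
    rintro _ ⟨e, he, rfl⟩
    have he' : e ∈ gr.closedSpanMul h⁻¹ h := hh ▸ he
    simpa using gr.mul_mem_closedSpanMul hc he'
  exact (gr.isClosed_closedSpanMul g h).closure_subset_iff.mpr himage
    (mem_closure_image_mul_of_star_mul_self_mem gr.partOneSubalgebra hcc)

end GradedCStar

/-- a `G`-grading of a C*-algebra `A` is strong if and only if
`cl span (A_g A_{g⁻¹}) = A_e` for every `g ∈ G`. -/
theorem isStrong_iff_forall_mul_inv
    {G : Type*} [Group G] {A : Type*} [NonUnitalCStarAlgebra A]
    [PartialOrder A] [StarOrderedRing A]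
    (gr : GradedCStar G A ⊤) :
    gr.IsStrong ↔ ∀ g : G,
      (Submodule.span ℂ {x : A | ∃ a ∈ gr.part g, ∃ b ∈ gr.part g⁻¹,
        x = a * b}).topologicalClosure = gr.part 1 := by
  refine ⟨fun hs g ↦ by simpa using hs g g⁻¹, fun H g h ↦ ?_⟩
  have hh := H h⁻¹
  simp only [inv_inv] at hh
  exact (gr.closedSpanMul_le_part g h).antisymm (gr.part_mul_le_closedSpanMul hh)
end

section
/- Let A be a strongly ℤ-graded C*-algebra. The left action of A_0 on the Hilbert A_0-module X = A_1 (by left multiplication) is by adjointable operators, is injective, and takes values in the compact operators K(X). -/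
/-! The strong-grading identity `A_0 = cl span (A_1 A_1*)` is exactly the statement that `A_0`
acts by compact operators on `A_1`. For injectivity: if `a ∈ A_0` kills `A_1`, it kills
`cl span (A_1 A_{-1}) = A_0`, in particular `a a* = 0`, so `a = 0` by the C*-identity. -/

/-- A strong ℤ-grading of a C*-algebra `A`: closed subspaces `part n` (n ∈ ℤ) with
`part m * part n ⊆ part (m+n)`, `(part n)* = part (-n)`, densely spanning `A`, and
satisfying the strong-grading condition `cl span (part m * part n) = part (m+n)`. -/
structure StrongZGrading (A : Type*) [NonUnitalCStarAlgebra A] where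
  part : ℤ → Submodule ℂ A
  closed : ∀ n, IsClosed (part n : Set A)
  mul_mem : ∀ {m n : ℤ} {a b : A}, a ∈ part m → b ∈ part n → a * b ∈ part (m + n)
  star_mem : ∀ {n : ℤ} {a : A}, a ∈ part n → star a ∈ part (-n)
  span_dense : (⨆ n, part n).topologicalClosure = ⊤
  strong : ∀ m n : ℤ, (Submodule.span ℂ
      {x : A | ∃ a ∈ part m, ∃ b ∈ part n, x = a * b}).topologicalClosure = part (m + n)

namespace StrongZGrading

variable {A : Type*} [NonUnitalCStarAlgebra A] (gr : StrongZGrading A)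

theorem mem_neg_iff_star_mem {n : ℤ} {a : A} : a ∈ gr.part (-n) ↔ star a ∈ gr.part n :=
  ⟨fun h => by simpa using gr.star_mem h, fun h => by simpa using gr.star_mem h⟩

theorem closure_span_mul_star (m n : ℤ) :
    (Submodule.span ℂ {z : A | ∃ x ∈ gr.part m, ∃ y ∈ gr.part n, z = x * star y}
      ).topologicalClosure = gr.part (m - n) := by
  have hset : {z : A | ∃ x ∈ gr.part m, ∃ y ∈ gr.part n, z = x * star y}
      = {z : A | ∃ x ∈ gr.part m, ∃ y ∈ gr.part (-n), z = x * y} := by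
    ext z
    constructor
    · rintro ⟨x, hx, y, hy, rfl⟩
      exact ⟨x, hx, star y, gr.star_mem hy, rfl⟩
    · rintro ⟨x, hx, y, hy, rfl⟩
      exact ⟨x, hx, star y, (gr.mem_neg_iff_star_mem).mp hy, by rw [star_star]⟩
  rw [hset, gr.strong, sub_eq_add_neg]

theorem mul_eq_zero_of_forall_mul_part_eq_zero {a : A} {m : ℤ}
    (h : ∀ x ∈ gr.part m, a * x = 0) (n : ℤ) : ∀ x ∈ gr.part (m + n), a * x = 0 := by
  have hle : gr.part (m + n) ≤ LinearMap.ker (ContinuousLinearMap.mul ℂ A a : A →ₗ[ℂ] A) := by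
    rw [← gr.strong]
    refine Submodule.topologicalClosure_minimal _ ?_ (ContinuousLinearMap.isClosed_ker _)
    rw [Submodule.span_le]
    rintro _ ⟨x, hx, y, -, rfl⟩
    simp [← mul_assoc, h x hx]
  exact fun x hx => hle hx

theorem eq_zero_of_forall_mul_part_eq_zero {a : A} {k m : ℤ} (ha : a ∈ gr.part k)
    (h : ∀ x ∈ gr.part m, a * x = 0) : a = 0 := by
  have hstar : star a ∈ gr.part (m + (-k - m)) := by
    simpa using gr.star_mem ha
  exact (CStarRing.mul_star_self_eq_zero_iff a).mp
    (gr.mul_eq_zero_of_forall_mul_part_eq_zero h _ _ hstar)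

end StrongZGrading

/-- for a strongly ℤ-graded C*-algebra `A`, the left action of `A_0`
on the Hilbert `A_0`-module `X = A_1` (with `⟨x,y⟩ = x* y`) by left multiplication:
(i) maps `X` into `X` and is adjointable, with adjoint given by left multiplication
by `star a` (i.e. `⟨a·x, y⟩ = ⟨x, a*·y⟩`); (ii) is injective; and (iii) takes values
in the compact operators `K(X)`: since `θ_{x,y}` is left multiplication by `x y*`,
every `a ∈ A_0` lies in the closed span of `{x y* : x, y ∈ X}`. -/
theorem strongZGrading_left_action_adjointable_injective_compact
    {A : Type*} [NonUnitalCStarAlgebra A] (gr : StrongZGrading A) :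
    (∀ a ∈ gr.part 0, ∀ x ∈ gr.part 1, a * x ∈ gr.part 1) ∧
    (∀ a ∈ gr.part 0, ∀ x ∈ gr.part 1, ∀ y ∈ gr.part 1,
        star (a * x) * y = star x * (star a * y)) ∧
    (∀ a ∈ gr.part 0, (∀ x ∈ gr.part 1, a * x = 0) → a = 0) ∧
    (∀ a ∈ gr.part 0, a ∈ (Submodule.span ℂ {z : A | ∃ x ∈ gr.part 1, ∃ y ∈ gr.part 1,
        z = x * star y}).topologicalClosure) := by
  refine ⟨fun a ha x hx => by simpa using gr.mul_mem ha hx,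
    fun a _ x _ y _ => by rw [star_mul, mul_assoc],
    fun a ha h => gr.eq_zero_of_forall_mul_part_eq_zero ha h,
    fun a ha => ?_⟩
  rwa [gr.closure_span_mul_star, sub_self]
end

section
/- Let H be a discrete abelian group and A a C*-algebra. Given an H-grading (A_g)_{g∈H} of A, there is a unique strongly continuous action γ of the Pontryagin dual group Ĥ on A by *-automorphisms such that γ_χ(a) = χ(g)·a for all g ∈ H and a ∈ A_g. -/
/-!
For a character `χ`, the would-be automorphism `γ_χ` has as graph (on the algebraic part) the span
of the graphs of `a ↦ χ g • a` on the `A_g`; this span is closed under the componentwise product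
and star of `A × A`. The expectation `E` makes the components of a finite sum `∑ a_g` no larger
than the sum, so a pair `(x, γ_χ x)` supported on `s` has `‖γ_χ x‖ ≤ #s ‖x‖`. Applying this to
`(x⋆x)^(2^n)`, whose support lies in `(s⁻¹s)^(2^n)` of only polynomial size since `H` is abelian,
and using the C⋆-identity gives `‖γ_χ x‖^(2^(n+1)) ≤ poly(2^n) ‖x‖^(2^(n+1))`, hence
`‖γ_χ x‖ ≤ ‖x‖`. So `γ_χ` extends continuously to `A`; the algebraic identities are checked on
the `A_g` and extend by density, and uniqueness is density again.
-/

open Finset Filter Topology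
open scoped Pointwise

namespace Finset
variable {M : Type*} [CommMonoid M] [DecidableEq M]

theorem card_pair_one_pow_le (a : M) (m : ℕ) : #(({1, a} : Finset M) ^ m) ≤ m + 1 := by
  suffices h : ({1, a} : Finset M) ^ m ⊆ (range (m + 1)).image (a ^ ·) from
    (card_le_card h).trans (card_image_le.trans (card_range _).le)
  induction m with
  | zero => simp [← singleton_one]
  | succ m ih =>
    intro x hx
    rw [pow_succ, mem_mul] at hx
    obtain ⟨y, hy, z, hz, rfl⟩ := hx
    obtain ⟨i, hi, rfl⟩ := mem_image.1 (ih hy)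
    rw [mem_range] at hi
    rcases mem_insert.1 hz with rfl | hz
    · exact mem_image.2 ⟨i, mem_range.2 (by omega), (mul_one _).symm⟩
    · rw [mem_singleton.1 hz]
      exact mem_image.2 ⟨i + 1, mem_range.2 (by omega), pow_succ _ _⟩

theorem card_pow_le_succ_pow_card (K : Finset M) (m : ℕ) : #(K ^ m) ≤ (m + 1) ^ #K := by
  suffices h : #(insert 1 K ^ m) ≤ (m + 1) ^ #K from
    (card_le_card (pow_subset_pow_left (subset_insert 1 K))).trans h
  induction K using Finset.induction_on with
  | empty => simp
  | insert a K ha ih =>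
    have hsub : insert 1 (insert a K) ⊆ {1, a} * insert 1 K := by
      intro x hx
      simp only [mem_insert] at hx
      rcases hx with rfl | rfl | hx
      · exact mem_mul.2 ⟨1, mem_insert_self 1 _, 1, mem_insert_self 1 K, mul_one 1⟩
      · exact mem_mul.2 ⟨x, by simp, 1, mem_insert_self 1 K, mul_one x⟩
      · exact mem_mul.2 ⟨1, mem_insert_self 1 _, x, mem_insert_of_mem hx, one_mul x⟩
    calc #(insert 1 (insert a K) ^ m) ≤ #(({1, a} * insert 1 K) ^ m) :=
          card_le_card (pow_subset_pow_left hsub)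
      _ ≤ #(({1, a} : Finset M) ^ m) * #(insert 1 K ^ m) := by rw [mul_pow]; exact card_mul_le
      _ ≤ (m + 1) * (m + 1) ^ #K := Nat.mul_le_mul (card_pair_one_pow_le a m) ih
      _ = (m + 1) ^ #(insert a K) := by rw [card_insert_of_notMem ha, pow_succ']

end Finset

theorem le_of_frequently_pow_le_mul_pow {a b : ℝ} (hb : 0 ≤ b) (r : ℕ)
    (h : ∃ᶠ m : ℕ in atTop, a ^ m ≤ (m : ℝ) ^ r * b ^ m) : a ≤ b := by
  by_contra! hba
  have ha : 0 < a := hb.trans_lt hba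
  have hlim := tendsto_pow_const_mul_const_pow_of_lt_one r (div_nonneg hb ha.le)
    ((div_lt_one ha).2 hba)
  refine h ((hlim.eventually (gt_mem_nhds one_pos)).mono fun m hm => ?_)
  rw [div_pow, ← mul_div_assoc, div_lt_one (pow_pos ha m)] at hm
  exact hm.not_ge

namespace GradedCStar

variable {H : Type*} [CommGroup H] {A : Type*} [NonUnitalCStarAlgebra A] [PartialOrder A]
  [StarOrderedRing A] (gr : GradedCStar H A ⊤)

theorem norm_le_norm_sum {s : Finset H} {c : H → A} (hc : ∀ g ∈ s, c g ∈ gr.part g) {k : H}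
    (hk : k ∈ s) : ‖c k‖ ≤ ‖∑ g ∈ s, c g‖ := by
  have hstar : star (c k) ∈ gr.part k⁻¹ := gr.star_mem (hc k hk)
  have hE : gr.E (star (c k) * ∑ g ∈ s, c g) = star (c k) * c k := by
    rw [mul_sum, map_sum, sum_eq_single_of_mem k hk]
    · refine gr.E_id _ ?_
      simpa using gr.mul_mem hstar (hc k hk)
    · intro g hg hgk
      refine gr.E_zero ?_ _ (gr.mul_mem hstar (hc g hg))
      rwa [ne_eq, inv_mul_eq_one, eq_comm]
  rcases (norm_nonneg (c k)).eq_or_lt with h0 | h0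
  · exact h0 ▸ norm_nonneg _
  refine le_of_mul_le_mul_left ?_ h0
  calc ‖c k‖ * ‖c k‖ = ‖gr.E (star (c k) * ∑ g ∈ s, c g)‖ := by
        rw [hE, CStarRing.norm_star_mul_self]
    _ ≤ ‖star (c k) * ∑ g ∈ s, c g‖ := gr.E_norm _ trivial
    _ ≤ ‖c k‖ * ‖∑ g ∈ s, c g‖ := by
        simpa only [norm_star] using norm_mul_le (star (c k)) (∑ g ∈ s, c g)

noncomputable def twistGraph (χ : H →* Circle) (g : H) : Submodule ℂ (A × A) :=
  (gr.part g).map (LinearMap.id.prod ((χ g : ℂ) • LinearMap.id))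

variable {gr} {χ : H →* Circle}

theorem mem_twistGraph {g : H} {p : A × A} :
    p ∈ gr.twistGraph χ g ↔ p.1 ∈ gr.part g ∧ p.2 = (χ g : ℂ) • p.1 := by
  constructor
  · rintro ⟨a, ha, rfl⟩
    exact ⟨ha, rfl⟩
  · rintro ⟨hp, hp'⟩
    exact ⟨p.1, hp, Prod.ext rfl hp'.symm⟩

theorem mul_mem_twistGraph {g h : H} {p q : A × A} (hp : p ∈ gr.twistGraph χ g)
    (hq : q ∈ gr.twistGraph χ h) : p * q ∈ gr.twistGraph χ (g * h) := by
  rw [mem_twistGraph] at *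
  refine ⟨gr.mul_mem hp.1 hq.1, ?_⟩
  rw [Prod.snd_mul, Prod.fst_mul, hp.2, hq.2, smul_mul_smul_comm, map_mul, Circle.coe_mul]

theorem star_mem_twistGraph {g : H} {p : A × A} (hp : p ∈ gr.twistGraph χ g) :
    star p ∈ gr.twistGraph χ g⁻¹ := by
  rw [mem_twistGraph] at *
  refine ⟨gr.star_mem hp.1, ?_⟩
  rw [Prod.snd_star, Prod.fst_star, hp.2, star_smul, map_inv, Circle.coe_inv_eq_conj]
  rfl

theorem mul_mem_iSup_twistGraph [DecidableEq H] {s t : Finset H} {p q : A × A}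
    (hp : p ∈ ⨆ g ∈ s, gr.twistGraph χ g) (hq : q ∈ ⨆ h ∈ t, gr.twistGraph χ h) :
    p * q ∈ ⨆ k ∈ s * t, gr.twistGraph χ k := by
  obtain ⟨μ, rfl⟩ := (Submodule.mem_iSup_finset_iff_exists_sum _ p).1 hp
  obtain ⟨ν, rfl⟩ := (Submodule.mem_iSup_finset_iff_exists_sum _ q).1 hq
  rw [sum_mul_sum]
  refine Submodule.sum_mem _ fun g hg => Submodule.sum_mem _ fun h hh => ?_
  exact (le_iSup₂ (f := fun k (_ : k ∈ s * t) => gr.twistGraph χ k) (g * h) (mul_mem_mul hg hh))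
    (mul_mem_twistGraph (μ g).2 (ν h).2)

theorem star_mem_iSup_twistGraph [DecidableEq H] {s : Finset H} {p : A × A}
    (hp : p ∈ ⨆ g ∈ s, gr.twistGraph χ g) : star p ∈ ⨆ g ∈ s⁻¹, gr.twistGraph χ g := by
  obtain ⟨μ, rfl⟩ := (Submodule.mem_iSup_finset_iff_exists_sum _ p).1 hp
  rw [star_sum]
  refine Submodule.sum_mem _ fun g hg => ?_
  exact (le_iSup₂ (f := fun k (_ : k ∈ s⁻¹) => gr.twistGraph χ k) g⁻¹ (inv_mem_inv hg))
    (star_mem_twistGraph (μ g).2)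

theorem norm_snd_le_card_mul {s : Finset H} {p : A × A} (hp : p ∈ ⨆ g ∈ s, gr.twistGraph χ g) :
    ‖p.2‖ ≤ #s * ‖p.1‖ := by
  obtain ⟨μ, rfl⟩ := (Submodule.mem_iSup_finset_iff_exists_sum _ p).1 hp
  have hμ : ∀ g, (μ g : A × A).1 ∈ gr.part g ∧ (μ g : A × A).2 = (χ g : ℂ) • (μ g : A × A).1 :=
    fun g => mem_twistGraph.1 (μ g).2
  rw [Prod.fst_sum, Prod.snd_sum, ← nsmul_eq_mul]
  refine (norm_sum_le _ _).trans (sum_le_card_nsmul _ _ _ fun g hg => ?_)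
  rw [(hμ g).2, norm_smul, Circle.norm_coe, one_mul]
  exact gr.norm_le_norm_sum (fun g _ => (hμ g).1) hg

theorem exists_mem_iSup_twistGraph_pow [DecidableEq H] {s : Finset H} {p : A × A}
    (hp : p ∈ ⨆ g ∈ s, gr.twistGraph χ g) (n : ℕ) :
    ∃ q ∈ ⨆ g ∈ (s⁻¹ * s) ^ 2 ^ n, gr.twistGraph χ g, IsSelfAdjoint q ∧
      ‖q.1‖ = ‖p.1‖ ^ 2 ^ (n + 1) ∧ ‖q.2‖ = ‖p.2‖ ^ 2 ^ (n + 1) := by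
  induction n with
  | zero =>
    refine ⟨star p * p, ?_, .star_mul_self p, ?_, ?_⟩
    · simpa using mul_mem_iSup_twistGraph (star_mem_iSup_twistGraph hp) hp
    · simp [CStarRing.norm_star_mul_self, sq]
    · simp [CStarRing.norm_star_mul_self, sq]
  | succ n ih =>
    obtain ⟨q, hq, hsa, h1, h2⟩ := ih
    refine ⟨q * q, ?_, by rw [IsSelfAdjoint, star_mul, hsa.star_eq], ?_, ?_⟩
    · rw [pow_succ, pow_mul, sq]
      exact mul_mem_iSup_twistGraph hq hq
    · rw [Prod.fst_mul, IsSelfAdjoint.norm_mul_self (congrArg Prod.fst hsa), h1, ← pow_mul,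
        ← pow_succ]
    · rw [Prod.snd_mul, IsSelfAdjoint.norm_mul_self (congrArg Prod.snd hsa), h2, ← pow_mul,
        ← pow_succ]

theorem norm_snd_le_norm_fst {p : A × A} (hp : p ∈ ⨆ g, gr.twistGraph χ g) : ‖p.2‖ ≤ ‖p.1‖ := by
  classical
  obtain ⟨s, hs⟩ := Submodule.mem_iSup_iff_exists_finset.1 hp
  refine le_of_frequently_pow_le_mul_pow (norm_nonneg _) #(s⁻¹ * s)
    (frequently_atTop.2 fun N => ⟨2 ^ (N + 1), (Nat.lt_two_pow_self).le.trans
      (Nat.pow_le_pow_right two_pos N.le_succ), ?_⟩)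
  obtain ⟨q, hq, -, h1, h2⟩ := exists_mem_iSup_twistGraph_pow hs N
  have hcard : (#((s⁻¹ * s) ^ 2 ^ N) : ℝ) ≤ ((2 ^ (N + 1) : ℕ) : ℝ) ^ #(s⁻¹ * s) := by
    have hN : 2 ^ N + 1 ≤ 2 ^ (N + 1) := by rw [pow_succ]; linarith [Nat.one_le_two_pow (n := N)]
    exact_mod_cast (card_pow_le_succ_pow_card _ _).trans (Nat.pow_le_pow_left hN _)
  rw [← h1, ← h2]
  exact (norm_snd_le_card_mul hq).trans (mul_le_mul_of_nonneg_right hcard (norm_nonneg _))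

variable (gr)

theorem dense_iSup_part : Dense ((⨆ g, gr.part g : Submodule ℂ A) : Set A) := by
  rw [Submodule.dense_iff_topologicalClosure_eq_top]
  exact gr.span_dense

variable (χ)

theorem denseRange_fst_twistGraph :
    DenseRange ((LinearMap.fst ℂ A A).comp (⨆ g, gr.twistGraph χ g).subtype) := by
  have hrange : LinearMap.range ((LinearMap.fst ℂ A A).comp (⨆ g, gr.twistGraph χ g).subtype) =
      ⨆ g, gr.part g := by
    simp only [LinearMap.range_comp, Submodule.range_subtype, Submodule.map_iSup, twistGraph,
      ← Submodule.map_comp, LinearMap.fst_prod, Submodule.map_id]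
  rw [DenseRange, ← LinearMap.coe_range, hrange]
  exact gr.dense_iSup_part

noncomputable def twist : A →L[ℂ] A :=
  ((LinearMap.snd ℂ A A).comp (⨆ g, gr.twistGraph χ g).subtype).extendOfNorm
    ((LinearMap.fst ℂ A A).comp (⨆ g, gr.twistGraph χ g).subtype)

theorem norm_snd_le_norm_fst_twistGraph (p : ↥(⨆ g, gr.twistGraph χ g)) :
    ‖(p : A × A).2‖ ≤ 1 * ‖(p : A × A).1‖ :=
  (one_mul ‖(p : A × A).1‖).symm ▸ norm_snd_le_norm_fst p.2

theorem twist_apply_of_mem {g : H} {a : A} (ha : a ∈ gr.part g) :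
    gr.twist χ a = (χ g : ℂ) • a :=
  LinearMap.extendOfNorm_eq (gr.denseRange_fst_twistGraph χ)
    ⟨1, gr.norm_snd_le_norm_fst_twistGraph χ⟩
    ⟨(a, (χ g : ℂ) • a), Submodule.mem_iSup_of_mem g (mem_twistGraph.2 ⟨ha, rfl⟩)⟩

theorem norm_twist_apply_le (a : A) : ‖gr.twist χ a‖ ≤ ‖a‖ := by
  simpa only [one_mul, twist] using LinearMap.norm_extendOfNorm_apply_le
    (gr.denseRange_fst_twistGraph χ) 1 (gr.norm_snd_le_norm_fst_twistGraph χ) a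

variable {χ}

theorem continuousLinearMap_ext {S M : Type*} [Semiring S] {σ : ℂ →+* S} [TopologicalSpace M]
    [T2Space M] [AddCommMonoid M] [Module S M] {f f' : A →SL[σ] M}
    (h : ∀ g, ∀ a ∈ gr.part g, f a = f' a) : f = f' := by
  refine ContinuousLinearMap.ext_on (s := ⋃ g, (gr.part g : Set A)) ?_ fun a ha => ?_
  · rw [← Submodule.iSup_eq_span]
    exact gr.dense_iSup_part
  · obtain ⟨g, hg⟩ := Set.mem_iUnion.1 ha
    exact h g a hg

theorem twist_comp_twist (χ ψ : H →* Circle) :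
    (gr.twist χ).comp (gr.twist ψ) = gr.twist (χ * ψ) :=
  gr.continuousLinearMap_ext fun g a ha => by
    rw [ContinuousLinearMap.comp_apply, gr.twist_apply_of_mem ψ ha, map_smul,
      gr.twist_apply_of_mem χ ha, gr.twist_apply_of_mem _ ha, smul_smul, MonoidHom.mul_apply,
      Circle.coe_mul, mul_comm]

theorem twist_one : gr.twist 1 = ContinuousLinearMap.id ℂ A :=
  gr.continuousLinearMap_ext fun g a ha => by
    rw [gr.twist_apply_of_mem 1 ha, MonoidHom.one_apply, Circle.coe_one, one_smul,
      ContinuousLinearMap.id_apply]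

theorem twist_mul (a b : A) : gr.twist χ (a * b) = gr.twist χ a * gr.twist χ b := by
  have hpart : ∀ h, ∀ b ∈ gr.part h, ∀ a, gr.twist χ (a * b) = gr.twist χ a * gr.twist χ b := by
    intro h b hb
    refine DFunLike.congr_fun (gr.continuousLinearMap_ext
      (f := (gr.twist χ).comp ((ContinuousLinearMap.mul ℂ A).flip b))
      (f' := ((ContinuousLinearMap.mul ℂ A).flip (gr.twist χ b)).comp (gr.twist χ))
      fun g a ha => ?_)
    simp only [ContinuousLinearMap.comp_apply, ContinuousLinearMap.flip_apply,
      ContinuousLinearMap.mul_apply']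
    rw [gr.twist_apply_of_mem χ (gr.mul_mem ha hb), gr.twist_apply_of_mem χ ha,
      gr.twist_apply_of_mem χ hb, smul_mul_smul_comm, map_mul, Circle.coe_mul]
  refine DFunLike.congr_fun (gr.continuousLinearMap_ext
    (f := (gr.twist χ).comp (ContinuousLinearMap.mul ℂ A a))
    (f' := (ContinuousLinearMap.mul ℂ A (gr.twist χ a)).comp (gr.twist χ))
    fun h b hb => ?_) b
  simp [hpart h b hb]

theorem twist_star (a : A) : gr.twist χ (star a) = star (gr.twist χ a) := by
  refine DFunLike.congr_fun (gr.continuousLinearMap_ext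
    (f := (gr.twist χ).comp (starL ℂ : A ≃L⋆[ℂ] A).toContinuousLinearMap)
    (f' := (starL ℂ : A ≃L⋆[ℂ] A).toContinuousLinearMap.comp (gr.twist χ))
    fun g a ha => ?_) a
  simp only [ContinuousLinearMap.comp_apply, ContinuousLinearEquiv.coe_coe, starL_apply]
  rw [gr.twist_apply_of_mem χ (gr.star_mem ha), gr.twist_apply_of_mem χ ha, star_smul, map_inv,
    Circle.coe_inv_eq_conj]
  rfl

variable (χ)

noncomputable def twistEquiv : A ≃⋆ₐ[ℂ] A where
  toFun := gr.twist χ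
  invFun := gr.twist χ⁻¹
  left_inv a := by
    rw [← ContinuousLinearMap.comp_apply, twist_comp_twist, inv_mul_cancel, twist_one]
    rfl
  right_inv a := by
    rw [← ContinuousLinearMap.comp_apply, twist_comp_twist, mul_inv_cancel, twist_one]
    rfl
  map_mul' := gr.twist_mul
  map_add' := map_add _
  map_star' := gr.twist_star
  map_smul' := map_smul _

theorem continuous_twist_apply [TopologicalSpace H] (a : A) :
    Continuous fun χ : PontryaginDual H => gr.twist (ContinuousMonoidHom.toMonoidHom χ) a := by
  have hdense : ∀ b ∈ ⨆ g, gr.part g,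
      Continuous fun χ : PontryaginDual H => gr.twist (ContinuousMonoidHom.toMonoidHom χ) b := by
    refine fun b hb => Submodule.iSup_induction (motive := fun b => Continuous fun χ :
      PontryaginDual H => gr.twist (ContinuousMonoidHom.toMonoidHom χ) b) _ hb
      (fun g b hb => ?_) ?_ fun b c hb hc => ?_
    · simp only [gr.twist_apply_of_mem _ hb]
      exact (continuous_subtype_val.comp
        (continuous_eval_const (F := ContinuousMonoidHom H Circle) g)).smul continuous_const
    · simp only [map_zero, continuous_const]
    · simp only [map_add]
      exact hb.add hc
  refine continuous_of_uniform_approx_of_continuous fun u hu => ?_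
  obtain ⟨ε, hε, hεu⟩ := Metric.mem_uniformity_dist.1 hu
  obtain ⟨b, hb, hab⟩ := gr.dense_iSup_part.exists_dist_lt a hε
  refine ⟨_, hdense b hb, fun χ => hεu ?_⟩
  rw [dist_eq_norm, ← map_sub]
  exact (gr.norm_twist_apply_le _ _).trans_lt (by rwa [← dist_eq_norm])

theorem eq_twistEquiv {φ : A ≃⋆ₐ[ℂ] A} (h : ∀ g, ∀ a ∈ gr.part g, φ a = (χ g : ℂ) • a) :
    φ = gr.twistEquiv χ := by
  have hφ : (⟨φ, (StarAlgEquiv.isometry φ).continuous⟩ : A →L[ℂ] A) = gr.twist χ :=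
    gr.continuousLinearMap_ext fun g a ha => (h g a ha).trans (gr.twist_apply_of_mem χ ha).symm
  exact StarAlgEquiv.ext fun a => DFunLike.congr_fun hφ a

end GradedCStar

theorem grading_gives_dual_action_general
    {H : Type*} [CommGroup H] [TopologicalSpace H]
    {A : Type*} [NonUnitalCStarAlgebra A] [PartialOrder A] [StarOrderedRing A]
    (gr : GradedCStar H A ⊤) :
    ∃! γ : PontryaginDual H → (A ≃⋆ₐ[ℂ] A),
      (∀ χ₁ χ₂ : PontryaginDual H, ∀ a : A, γ (χ₁ * χ₂) a = γ χ₁ (γ χ₂ a)) ∧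
      (∀ a : A, Continuous fun χ : PontryaginDual H => γ χ a) ∧
      (∀ g : H, ∀ a ∈ gr.part g, ∀ χ : PontryaginDual H, γ χ a = (χ g : ℂ) • a) := by
  refine ⟨fun χ => gr.twistEquiv (ContinuousMonoidHom.toMonoidHom χ), ⟨fun χ₁ χ₂ a => ?_,
    gr.continuous_twist_apply, fun g a ha χ => gr.twist_apply_of_mem _ ha⟩, ?_⟩
  · exact (DFunLike.congr_fun (gr.twist_comp_twist _ _) a).symm
  · rintro γ ⟨-, -, hγ⟩
    exact funext fun χ => gr.eq_twistEquiv _ fun g a ha => hγ g a ha χ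

/-- given an `H`-grading of a C*-algebra `A` by a discrete abelian
group `H` (written multiplicatively), there is a unique strongly continuous action
`γ` of the Pontryagin dual `Ĥ` on `A` by *-automorphisms such that
`γ_χ(a) = χ(g) • a` for all `g ∈ H` and `a ∈ A_g`. -/
theorem grading_gives_dual_action
    {H : Type*} [CommGroup H] [TopologicalSpace H] [DiscreteTopology H] [IsTopologicalGroup H]
    {A : Type*} [NonUnitalCStarAlgebra A] [PartialOrder A] [StarOrderedRing A]
    (gr : GradedCStar H A ⊤) :
    ∃! γ : PontryaginDual H → (A ≃⋆ₐ[ℂ] A),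
      (∀ χ₁ χ₂ : PontryaginDual H, ∀ a : A, γ (χ₁ * χ₂) a = γ χ₁ (γ χ₂ a)) ∧
      (∀ a : A, Continuous fun χ : PontryaginDual H => γ χ a) ∧
      (∀ g : H, ∀ a ∈ gr.part g, ∀ χ : PontryaginDual H, γ χ a = (χ g : ℂ) • a) :=
  grading_gives_dual_action_general gr
end

section
/- Let A be a strongly ℤ-graded C*-algebra, 𝒜 ⊆ A_0 a C*-subalgebra and X ⊆ A_1 a closed subspace such that X𝒜 ⊆ X, cl span(𝒜X) = X, 𝒜 = cl span{x*y : x,y ∈ X}, and cl span{xy* : x,y ∈ X} contains an approximate identity for 𝒜. Then X, with actions by multiplication and inner product ⟨x,y⟩ = x*y, is a nondegenerate full C*-correspondence over 𝒜 with injective left action by compact operators. -/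
/-- let `A` be strongly ℤ-graded, `𝒜 ⊆ A_0` a C*-subalgebra and
`X ⊆ A_1` a closed subspace with `X𝒜 ⊆ X`, `cl span (𝒜 X) = X`,
`𝒜 = cl span {x* y : x, y ∈ X}`, and such that `cl span {x y* : x, y ∈ X}` contains an
approximate identity for `𝒜`. Then `X`, with actions by multiplication and inner
product `⟨x,y⟩ = x* y`, is a nondegenerate full C*-correspondence over `𝒜` with
injective left action by compact operators. -/
theorem improved_correspondence_from_grading
    {A : Type*} [NonUnitalCStarAlgebra A] [PartialOrder A] [StarOrderedRing A]
    (gr : StrongZGrading A)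
    (𝒜 X : Submodule ℂ A)
    (h𝒜closed : IsClosed (𝒜 : Set A))
    (h𝒜mul : ∀ a ∈ 𝒜, ∀ b ∈ 𝒜, a * b ∈ 𝒜)
    (h𝒜star : ∀ a ∈ 𝒜, star a ∈ 𝒜)
    (h𝒜le : 𝒜 ≤ gr.part 0)
    (hXclosed : IsClosed (X : Set A))
    (hXle : X ≤ gr.part 1)
    -- condition (1): `X𝒜 ⊆ X` and `cl span (𝒜 X) = X`
    (h1a : ∀ x ∈ X, ∀ a ∈ 𝒜, x * a ∈ X)
    (h1b : (Submodule.span ℂ {z : A | ∃ a ∈ 𝒜, ∃ x ∈ X,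
        z = a * x}).topologicalClosure = X)
    -- condition (2): `𝒜 = cl span {x* y : x, y ∈ X}`
    (h2 : (Submodule.span ℂ {z : A | ∃ x ∈ X, ∃ y ∈ X,
        z = star x * y}).topologicalClosure = 𝒜)
    -- condition (3): `cl span {x y* : x, y ∈ X}` contains an approximate identity for `𝒜`
    (h3 : ∀ a ∈ 𝒜, ∀ ε : ℝ, 0 < ε →
      ∃ u ∈ Submodule.span ℂ {z : A | ∃ x ∈ X, ∃ y ∈ X, z = x * star y},
        ‖u‖ ≤ 1 ∧ ‖u * a - a‖ < ε ∧ ‖a * u - a‖ < ε) :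
    -- `X` is a right Hilbert `𝒜`-module:
    (∀ x ∈ X, ∀ y ∈ X, star x * y ∈ 𝒜) ∧
    (∀ x ∈ X, 0 ≤ star x * x) ∧
    (∀ x ∈ X, star x * x = 0 → x = 0) ∧
    -- it is full and (left) nondegenerate (these are conditions (2) and (1b));
    -- the left action of `𝒜` by multiplication is adjointable,
    (∀ a ∈ 𝒜, ∀ x ∈ X, a * x ∈ X) ∧
    (∀ a ∈ 𝒜, ∀ x ∈ X, ∀ y ∈ X, star (a * x) * y = star x * (star a * y)) ∧
    -- injective,
    (∀ a ∈ 𝒜, (∀ x ∈ X, a * x = 0) → a = 0) ∧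
    -- and compact: every `a ∈ 𝒜` acts as an element of `cl span {θ_{x,y}} `, where
    -- `θ_{x,y}` is left multiplication by `x y*`.
    (∀ a ∈ 𝒜, a ∈ (Submodule.span ℂ {z : A | ∃ x ∈ X, ∃ y ∈ X,
        z = x * star y}).topologicalClosure) := by

  refine ⟨?_, ?_, ?_, ?_, ?_, ?_, ?_⟩
  · intro x hx y hy
    rw [← h2]
    exact Submodule.le_topologicalClosure _
      (Submodule.subset_span ⟨x, hx, y, hy, rfl⟩)
  · intro x _
    exact star_mul_self_nonneg x
  · intro x _ hx
    exact (CStarRing.star_mul_self_eq_zero_iff x).mp hx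
  · intro a ha x hx
    rw [← h1b]
    exact Submodule.le_topologicalClosure _
      (Submodule.subset_span ⟨a, ha, x, hx, rfl⟩)
  · intro a _ x _ y _
    rw [star_mul, mul_assoc]
  · intro a ha hax
    have key : ∀ u ∈ Submodule.span ℂ {z : A | ∃ x ∈ X, ∃ y ∈ X, z = x * star y},
        a * u = 0 := by
      intro u hu
      induction hu using Submodule.span_induction with
      | mem z hz =>
        obtain ⟨x, hx, y, hy, rfl⟩ := hz
        rw [← mul_assoc, hax x hx, zero_mul]
      | zero => rw [mul_zero]
      | add u v _ _ hu hv => rw [mul_add, hu, hv, add_zero]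
      | smul c u _ hu => rw [mul_smul_comm, hu, smul_zero]
    have : ‖a‖ = 0 := by
      by_contra h
      have hpos : 0 < ‖a‖ := lt_of_le_of_ne (norm_nonneg a) (Ne.symm h)
      obtain ⟨u, hu, -, -, hau⟩ := h3 a ha ‖a‖ hpos
      rw [key u hu, zero_sub, norm_neg] at hau
      exact lt_irrefl _ hau
    exact norm_eq_zero.mp this
  · intro a ha
    have hmem : ∀ u ∈ Submodule.span ℂ {z : A | ∃ x ∈ X, ∃ y ∈ X, z = x * star y},
        u * a ∈ Submodule.span ℂ {z : A | ∃ x ∈ X, ∃ y ∈ X, z = x * star y} := by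
      intro u hu
      induction hu using Submodule.span_induction with
      | mem z hz =>
        obtain ⟨x, hx, y, hy, rfl⟩ := hz
        have hAy : star a * y ∈ X := by
          rw [← h1b]
          exact Submodule.le_topologicalClosure _
            (Submodule.subset_span ⟨star a, h𝒜star a ha, y, hy, rfl⟩)
        have : x * star y * a = x * star (star a * y) := by
          rw [star_mul, star_star, mul_assoc]
        rw [this]
        exact Submodule.subset_span ⟨x, hx, star a * y, hAy, rfl⟩
      | zero => simp
      | add u v _ _ hu hv => simpa [add_mul] using Submodule.add_mem _ hu hv
      | smul c u _ hu => simpa [smul_mul_assoc] using Submodule.smul_mem _ c hu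
    have : a ∈ closure ((Submodule.span ℂ
        {z : A | ∃ x ∈ X, ∃ y ∈ X, z = x * star y} : Submodule ℂ A) : Set A) := by
      rw [Metric.mem_closure_iff]
      intro ε hε
      obtain ⟨u, hu, -, hua, -⟩ := h3 a ha ε hε
      exact ⟨u * a, hmem u hu, by rwa [dist_eq_norm, norm_sub_rev]⟩
    exact this
end
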